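/- arXiv:2106.16089 — 5 statements merged into one kernel-verified Lean document; each statement's English description precedes it below -/
import Mathlib

section
/- No oriented graph derived from a Burling tree contains a directed cycle. -/
/-- An oriented graph on vertex type `V`: an irreflexive, asymmetric arc relation. -/
structure OrientedGraph (V : Type) where
  arc : V → V → Prop
  irrefl : ∀ v, ¬ arc v v
  asymm : ∀ u v, arc u v → ¬ arc v u

/-- A Burling tree `(T, root, lastBorn, choose)`.  The tree is encoded by its parent
function (with `parent root = root`); `lastBorn v` is a distinguished child of each
non-leaf `v`; `choose v` is the vertex set of a (possibly empty) branch of the tree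
starting at the last-born of the parent of `v` when `v` is neither the root nor a
last-born, and is empty otherwise. -/
structure BurlingTree (V : Type) where
  root : V
  parent : V → V
  parent_root : parent root = root
  reaches_root : ∀ v, ∃ n, parent^[n] v = root
  lastBorn : V → V
  lastBorn_child : ∀ v w, w ≠ root → parent w = v →
    lastBorn v ≠ root ∧ parent (lastBorn v) = v
  choose : V → Set V
  choose_root : choose root = ∅
  choose_lastBorn : ∀ v, v ≠ root → lastBorn (parent v) = v → choose v = ∅
  choose_branch : ∀ v, v ≠ root → lastBorn (parent v) ≠ v →
    choose v = ∅ ∨ ∃ b, (∃ n, parent^[n] b = lastBorn (parent v)) ∧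
      choose v = {x | (∃ n, parent^[n] x = lastBorn (parent v)) ∧ ∃ n, parent^[n] b = x}

namespace BurlingTree

variable {V : Type} (T : BurlingTree V)

/-- `u` is an ancestor of `v` in `T` (possibly `u = v`). -/
def Anc (u v : V) : Prop := ∃ n, T.parent^[n] v = u

/-- Arc relation of the oriented graph derived from `T` with vertex set `S`
(the induced subgraph, on `S`, of the graph fully derived from `T`). -/
def Arc (S : Set V) (u v : V) : Prop := u ∈ S ∧ v ∈ S ∧ v ∈ T.choose u

/-- Underlying undirected graph of the derived graph on `S`. -/
def UGraph (S : Set V) : SimpleGraph V := SimpleGraph.fromRel (T.Arc S)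

/-- Closed in-neighborhood `N⁻[v]` in the derived graph on `S`. -/
def InNbhd (S : Set V) (v : V) : Set V := insert v {u | T.Arc S u v}

/-- The top-set of the derived graph on `S`: vertices of `S` that are the unique
vertex of `S` on the branch of `T` from the root to them. -/
def TopSet (S : Set V) : Set V := {v | v ∈ S ∧ ∀ x ∈ S, T.Anc x v → x = v}

end BurlingTree

/-- Reachability between `u` and `w` inside the set `A` of vertices of `G`. -/
def ReachIn {V : Type} (G : SimpleGraph V) (A : Set V) (u w : V) : Prop :=
  Relation.ReflTransGen (fun x y => x ∈ A ∧ y ∈ A ∧ G.Adj x y) u w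

/-- `N⁻[v]` is a full in-star cutset of the graph derived from `T` on `S`. -/
def BurlingTree.IsFullInStarCutset {V : Type} (T : BurlingTree V) (S : Set V) (v : V) : Prop :=
  ∃ a ∈ S \ T.InNbhd S v, ∃ b ∈ S \ T.InNbhd S v,
    ¬ ReachIn (T.UGraph S) (S \ T.InNbhd S v) a b

/-- The arc relation `A` is an in-forest: a disjoint union of orientations of rooted
trees with all edges oriented towards the root.  Equivalently: it is irreflexive and
asymmetric, its underlying graph is a forest, every vertex has at most one
out-neighbor, and from every vertex the unique outgoing directed path terminates in
a sink. -/
def IsInForestRel {V : Type} (A : V → V → Prop) : Prop :=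
  (∀ v, ¬ A v v) ∧ (∀ u v, A u v → ¬ A v u) ∧
  (SimpleGraph.fromRel A).IsAcyclic ∧
  (∀ u v w, A u v → A u w → v = w) ∧
  (∀ v, ∃ r, Relation.ReflTransGen A v r ∧ ∀ w, ¬ A r w)

/-- The arc relation `A` forms an in-tree on the vertex set `U`:
an in-forest all of whose vertices in `U` reach a common root. -/
def IsInTreeOn {V : Type} (A : V → V → Prop) (U : Set V) : Prop :=
  IsInForestRel A ∧ ∃ r ∈ U, ∀ v ∈ U, Relation.ReflTransGen A v r

/-- The graph with arc relation `A` and vertex set `U` is an oriented chandelier: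
it is obtained from an in-tree `G'` (on `U` minus an apex `v`) with at least two
leaves by adding the vertex `v` and exactly the arcs from each leaf of `G'` to `v`.
A leaf of the in-tree is a source having exactly one out-neighbor. -/
def ChandelierOn {V : Type} (A : V → V → Prop) (U : Set V) : Prop :=
  ∃ v ∈ U,
    IsInTreeOn (fun a b => A a b ∧ a ≠ v ∧ b ≠ v) (U \ {v}) ∧
    (∀ u, ¬ A v u) ∧
    (∀ u, A u v ↔ (u ∈ U ∧ u ≠ v ∧ (∀ w, ¬ (A w u ∧ w ≠ v ∧ u ≠ v)) ∧
       ∃ w, A u w ∧ w ≠ v ∧ u ≠ v)) ∧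
    (∃ u₁ u₂, u₁ ≠ u₂ ∧ A u₁ v ∧ A u₂ v)

namespace OrientedGraph

variable {V : Type} (G : OrientedGraph V)

/-- Underlying undirected simple graph of an oriented graph. -/
def toSimpleGraph : SimpleGraph V := SimpleGraph.fromRel G.arc

/-- `G` is an in-forest. -/
def IsInForest : Prop := IsInForestRel G.arc

/-- `G` is an oriented chandelier. -/
def IsChandelier : Prop := ChandelierOn G.arc Set.univ

/-- Closed in-neighborhood `N⁻[v]`. -/
def InNbhd (v : V) : Set V := insert v {u | G.arc u v}

/-- `G` has a full in-star cutset: for some vertex `v`, removing `N⁻[v]`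
disconnects the underlying graph. -/
def HasFullInStarCutset : Prop :=
  ∃ v, ∃ a ∈ (G.InNbhd v)ᶜ, ∃ b ∈ (G.InNbhd v)ᶜ,
    ¬ ReachIn G.toSimpleGraph (G.InNbhd v)ᶜ a b

/-- `v` is a cut vertex of `G`: some two vertices distinct from `v` are connected
in the underlying graph but disconnected after removing `v`. -/
def IsCutVertex (v : V) : Prop :=
  ∃ a b, a ≠ v ∧ b ≠ v ∧ G.toSimpleGraph.Reachable a b ∧
    ¬ ReachIn G.toSimpleGraph {v}ᶜ a b

/-- `G` is a `k`-Burling oriented graph: it is isomorphic to a graph derived from a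
Burling tree `T` such that every branch of `T` contains at most `k` vertices of `G`. -/
def IsKBurling (k : ℕ) : Prop :=
  ∃ (W : Type) (T : BurlingTree W) (f : V → W),
    Function.Injective f ∧
    (∀ u v, G.arc u v ↔ T.Arc (Set.range f) (f u) (f v)) ∧
    ∀ b : W, ({x | x ∈ Set.range f ∧ T.Anc x b}).ncard ≤ k

end OrientedGraph

/-- The graph with arc relation `A` on vertex set `U` is (isomorphic to) a graph
derived from some Burling tree. -/
def IsDerivedOn {V : Type} (A : V → V → Prop) (U : Set V) : Prop :=
  ∃ (W : Type) (T : BurlingTree W) (f : V → W),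
    Set.InjOn f U ∧ ∀ a ∈ U, ∀ b ∈ U, (A a b ↔ f b ∈ T.choose (f a))

/-- `C` is a hole of the graph derived from `T` on `S`: an induced cycle of length
at least 4 of the underlying graph (a finite set of at least four vertices whose
induced subgraph is connected and 2-regular). -/
def BurlingTree.IsHole {V : Type} (T : BurlingTree V) (S : Set V) (C : Set V) : Prop :=
  C ⊆ S ∧ C.Finite ∧ 4 ≤ C.ncard ∧
  (∀ x ∈ C, ({y | y ∈ C ∧ (T.UGraph S).Adj x y}).ncard = 2) ∧
  (∀ x ∈ C, ∀ y ∈ C, ReachIn (T.UGraph S) C x y)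

/-- `p` is the pivot of the hole `C`: a sink of the hole both of whose neighbors in
the hole are sources of the hole (the antennas). -/
def BurlingTree.IsPivotOf {V : Type} (T : BurlingTree V) (S : Set V) (C : Set V) (p : V) : Prop :=
  p ∈ C ∧ (∀ w ∈ C, ¬ T.Arc S p w) ∧
  (∀ q ∈ C, (T.UGraph S).Adj p q → ∀ w ∈ C, ¬ T.Arc S w q)

namespace BurlingTree

variable {V : Type} (T : BurlingTree V)

attribute [local instance] Classical.propDecidable

/-- Depth of a vertex: the least number of parent steps reaching the root. -/
noncomputable def depth (v : V) : ℕ := Nat.find (T.reaches_root v)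

lemma depth_spec (v : V) : T.parent^[T.depth v] v = T.root := Nat.find_spec (T.reaches_root v)

lemma iterate_root (m : ℕ) : T.parent^[m] T.root = T.root :=
  Function.iterate_fixed T.parent_root m

lemma depth_parent {x : V} (hx : x ≠ T.root) :
    T.depth x = T.depth (T.parent x) + 1 := by
  have h1 : T.parent^[T.depth (T.parent x) + 1] x = T.root := by
    rw [Function.iterate_succ_apply]
    exact T.depth_spec (T.parent x)
  have hle : T.depth x ≤ T.depth (T.parent x) + 1 := Nat.find_min' _ h1
  have h2 : 1 ≤ T.depth x := by
    rcases Nat.eq_zero_or_pos (T.depth x) with h | h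
    · exfalso; have := T.depth_spec x; rw [h] at this; exact hx this
    · exact h
  have h3 : T.parent^[T.depth x - 1] (T.parent x) = T.root := by
    rw [← Function.iterate_succ_apply]
    have he : T.depth x - 1 + 1 = T.depth x := Nat.succ_pred_eq_of_pos h2
    rw [Nat.succ_eq_add_one, he]; exact T.depth_spec x
  have h4 : T.depth (T.parent x) ≤ T.depth x - 1 := Nat.find_min' _ h3
  omega

lemma depth_of_anc {x u : V} {n : ℕ} (h : T.parent^[n] x = u) (hu : u ≠ T.root) :
    T.depth x = T.depth u + n := by
  have h1 : T.parent^[T.depth u + n] x = T.root := by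
    rw [Function.iterate_add_apply, h]; exact T.depth_spec u
  have hle : T.depth x ≤ T.depth u + n := Nat.find_min' _ h1
  have hn : n ≤ T.depth x := by
    by_contra hc
    push_neg at hc
    have hr : T.parent^[n] x = T.root := by
      have he : n = (n - T.depth x) + T.depth x := by omega
      rw [he, Function.iterate_add_apply, T.depth_spec x, T.iterate_root]
    exact hu (h.symm.trans hr)
  have h3 : T.parent^[T.depth x - n] u = T.root := by
    rw [← h, ← Function.iterate_add_apply]
    have he : T.depth x - n + n = T.depth x := by omega
    rw [he]; exact T.depth_spec x
  have h4 : T.depth u ≤ T.depth x - n := Nat.find_min' _ h3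
  omega

lemma arc_depth {S : Set V} {u v : V} (h : T.Arc S u v) :
    T.depth u ≤ T.depth v ∧ (T.depth u = T.depth v → T.choose v = ∅) := by
  obtain ⟨hu, hv, hch⟩ := h
  have hune : u ≠ T.root := by
    rintro rfl; rw [T.choose_root] at hch; exact hch
  have hlb : T.lastBorn (T.parent u) ≠ u := by
    intro he
    rw [T.choose_lastBorn u hune he] at hch; exact hch
  obtain ⟨hs_ne, hs_par⟩ := T.lastBorn_child (T.parent u) u hune rfl
  rcases T.choose_branch u hune hlb with h0 | ⟨b, hb, hset⟩
  · rw [h0] at hch; exact absurd hch (Set.notMem_empty v)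
  · rw [hset] at hch
    obtain ⟨⟨n, hn⟩, -⟩ := hch
    have hdu : T.depth u = T.depth (T.lastBorn (T.parent u)) := by
      rw [T.depth_parent hune, T.depth_parent hs_ne, hs_par]
    have hdv : T.depth v = T.depth (T.lastBorn (T.parent u)) + n :=
      T.depth_of_anc hn hs_ne
    refine ⟨by omega, fun he => ?_⟩
    have hn0 : n = 0 := by omega
    subst hn0
    simp only [Function.iterate_zero, id_eq] at hn
    have hvne : v ≠ T.root := by rw [hn]; exact hs_ne
    have hvlb : T.lastBorn (T.parent v) = v := by
      rw [hn, hs_par]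
    exact T.choose_lastBorn v hvne hvlb

end BurlingTree

/-- No oriented graph derived from a Burling tree contains a directed
cycle (distinct vertices `f 0, …, f (k-1)`, `k ≥ 3`, with arcs around the cycle). -/
theorem stmt1 (V : Type) (T : BurlingTree V) (S : Set V) (k : ℕ) (hk : 3 ≤ k)
    (f : ℕ → V) (hinj : Set.InjOn f {i | i < k}) :
    ¬ ∀ i < k, T.Arc S (f i) (f ((i + 1) % k)) := by
  intro hall
  have key : ∀ i < k, T.depth (f i) ≤ T.depth (f ((i + 1) % k)) :=
    fun i hi => (T.arc_depth (hall i hi)).1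
  have chain : ∀ j, 1 ≤ j → j < k → T.depth (f 1) ≤ T.depth (f j) := by
    intro j
    induction j with
    | zero => omega
    | succ m ih =>
      intro h1 hj
      rcases Nat.lt_or_ge 1 (m + 1) with hlt | hle
      · have hm1 : 1 ≤ m := by omega
        have hmk : m < k := by omega
        have h := key m hmk
        rw [Nat.mod_eq_of_lt hj] at h
        exact le_trans (ih hm1 hmk) h
      · have : m + 1 = 1 := by omega
        rw [this]
  have h1le0 : T.depth (f 1) ≤ T.depth (f 0) := by
    have h := key (k - 1) (by omega)
    have he : (k - 1 + 1) % k = 0 := by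
      have : k - 1 + 1 = k := by omega
      rw [this, Nat.mod_self]
    rw [he] at h
    exact le_trans (chain (k - 1) (by omega) (by omega)) h
  have h0le1 : T.depth (f 0) ≤ T.depth (f 1) := by
    have h := key 0 (by omega)
    rwa [Nat.mod_eq_of_lt (by omega : (0 + 1) < k)] at h
  have harc0 := hall 0 (by omega)
  rw [Nat.mod_eq_of_lt (by omega : (0 + 1) < k)] at harc0
  have hempty : T.choose (f 1) = ∅ := (T.arc_depth harc0).2 (le_antisymm h0le1 h1le0)
  have harc1 := hall 1 (by omega)
  obtain ⟨-, -, hmem⟩ := harc1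
  rw [hempty] at hmem
  exact hmem
end

section
/- Let G be an oriented graph derived from a Burling tree T and let u, v, w be three vertices of G appearing in this order along a branch of T (u an ancestor of v, v an ancestor of w, all distinct). Then the closed in-neighborhood N⁻[v] is a full in-star cutset of G separating u from w: u and w lie in distinct connected components of G \ N⁻[v]. -/
namespace BurlingTree

variable {V : Type} {T : BurlingTree V}

lemma anc_trans' {a b c : V} (h1 : T.Anc a b) (h2 : T.Anc b c) : T.Anc a c := by
  obtain ⟨m, hm⟩ := h1; obtain ⟨n, hn⟩ := h2
  exact ⟨m + n, by rw [Function.iterate_add_apply, hn, hm]⟩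

lemma root_fix' (j : ℕ) : T.parent^[j] T.root = T.root := by
  induction j with
  | zero => rfl
  | succ j ih => rw [Function.iterate_succ_apply', ih, T.parent_root]

lemma cycle_root' {p : V} {n : ℕ} (hn : n ≠ 0) (h : T.parent^[n] p = p) : p = T.root := by
  obtain ⟨m, hm⟩ := T.reaches_root p
  have key : ∀ k, T.parent^[k * n] p = p := by
    intro k
    induction k with
    | zero => simp
    | succ k ih => rw [Nat.succ_mul, Function.iterate_add_apply, h, ih]
  have h1 : m ≤ m * n := Nat.le_mul_of_pos_right m (Nat.pos_of_ne_zero hn)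
  calc p = T.parent^[m * n] p := (key m).symm
    _ = T.parent^[m * n - m] (T.parent^[m] p) := by
        rw [← Function.iterate_add_apply, Nat.sub_add_cancel h1]
    _ = T.root := by rw [hm]; exact root_fix' _

lemma anc_antisymm' {a b : V} (h1 : T.Anc a b) (h2 : T.Anc b a) (hne : a ≠ b) : False := by
  obtain ⟨m, hm⟩ := h1; obtain ⟨n, hn⟩ := h2
  have hcyc : T.parent^[m + n] a = a := by
    rw [Function.iterate_add_apply, hn, hm]
  rcases Nat.eq_zero_or_pos (m + n) with h0 | hpos
  · have hm0 : m = 0 := Nat.eq_zero_of_add_eq_zero_right h0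
    have hn0 : n = 0 := Nat.eq_zero_of_add_eq_zero_left h0
    subst hm0; subst hn0
    exact hne (hn.symm ▸ rfl)
  · have ha : a = T.root := cycle_root' hpos.ne' hcyc
    subst ha
    have : b = T.root := by rw [← hn, root_fix']
    exact hne this.symm

lemma anc_strict' {a b : V} (h : T.Anc a b) (hne : a ≠ b) : T.Anc a (T.parent b) := by
  obtain ⟨n, hn⟩ := h
  cases n with
  | zero => exact absurd hn.symm hne
  | succ n => exact ⟨n, by rwa [Function.iterate_succ_apply] at hn⟩

lemma anc_parent' (b : V) : T.Anc (T.parent b) b := ⟨1, rfl⟩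

lemma anc_comparable' {a b x : V} (ha : T.Anc a x) (hb : T.Anc b x) :
    T.Anc a b ∨ T.Anc b a := by
  obtain ⟨m, hm⟩ := ha; obtain ⟨n, hn⟩ := hb
  rcases le_total m n with h | h
  · right
    refine ⟨n - m, ?_⟩
    rw [← hm, ← Function.iterate_add_apply, Nat.sub_add_cancel h, hn]
  · left
    refine ⟨m - n, ?_⟩
    rw [← hn, ← Function.iterate_add_apply, Nat.sub_add_cancel h, hm]

lemma sibling_root' {a b : V} (hp : T.parent a = T.parent b) (h : T.Anc a b)
    (hne : a ≠ b) : a = T.root := by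
  obtain ⟨n, hn⟩ := h
  have hn0 : n ≠ 0 := by rintro rfl; exact hne hn.symm
  have hcyc : T.parent^[n] (T.parent b) = T.parent b := by
    rw [← Function.iterate_succ_apply, Function.iterate_succ_apply', hn, hp]
  have hpb : T.parent b = T.root := cycle_root' hn0 hcyc
  obtain ⟨k, hk⟩ := Nat.exists_eq_succ_of_ne_zero hn0
  subst hk
  rw [← hn, Function.iterate_succ_apply, hpb, root_fix']

lemma choose_struct' {x y : V} (h : y ∈ T.choose x) :
    x ≠ T.root ∧ T.lastBorn (T.parent x) ≠ x ∧
    T.Anc (T.lastBorn (T.parent x)) y ∧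
    ∀ z, T.Anc (T.lastBorn (T.parent x)) z → T.Anc z y → z ∈ T.choose x := by
  have hx : x ≠ T.root := by rintro rfl; rw [T.choose_root] at h; exact h
  have hlb : T.lastBorn (T.parent x) ≠ x := by
    intro he; rw [T.choose_lastBorn x hx he] at h; exact h
  rcases T.choose_branch x hx hlb with he | ⟨b, hb, hc⟩
  · rw [he] at h; exact absurd h (Set.notMem_empty y)
  · rw [hc] at h
    obtain ⟨hLy, hyb⟩ := h
    refine ⟨hx, hlb, hLy, fun z hLz hzy => ?_⟩
    rw [hc]
    exact ⟨hLz, anc_trans' hzy hyb⟩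

/-- A strict ancestor `u` of `v` does not have `v` in its choose set. -/
lemma not_choose_of_anc' {u v : V} (huv : T.Anc u v) (hne : u ≠ v) :
    v ∉ T.choose u := by
  intro h
  obtain ⟨hur, hlb, hLv, _⟩ := choose_struct' h
  obtain ⟨hLr, hpL⟩ := T.lastBorn_child (T.parent u) u hur rfl
  rcases anc_comparable' huv hLv with h' | h'
  · exact hur (sibling_root' hpL.symm h' (Ne.symm hlb))
  · exact hLr (sibling_root' hpL h' hlb)

/-- A strict descendant `w` of `v` does not have `v` in its choose set. -/
lemma not_choose_of_desc' {v w : V} (hvw : T.Anc v w) (hne : v ≠ w) :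
    v ∉ T.choose w := by
  intro h
  obtain ⟨hwr, hlb, hLv, _⟩ := choose_struct' h
  obtain ⟨hLr, hpL⟩ := T.lastBorn_child (T.parent w) w hwr rfl
  have hLw : T.Anc (T.lastBorn (T.parent w)) w := anc_trans' hLv hvw
  exact hLr (sibling_root' hpL hLw hlb)

lemma closure' {S : Set V} {v x y : V} (hv : v ∈ S)
    (hy : T.Anc v y) (hyN : y ∉ T.InNbhd S v) (hxN : x ∉ T.InNbhd S v)
    (hadj : (T.UGraph S).Adj x y) : T.Anc v x := by
  have hyv : y ≠ v := fun he => hyN (by rw [he]; exact Set.mem_insert v _)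
  have hxv : x ≠ v := fun he => hxN (by rw [he]; exact Set.mem_insert v _)
  rw [UGraph, SimpleGraph.fromRel_adj] at hadj
  obtain ⟨hne, harc | harc⟩ := hadj
  · -- Arc x y : y ∈ choose x
    obtain ⟨hxS, hyS, hcy⟩ := harc
    obtain ⟨hxr, hlb, hLy, hclo⟩ := choose_struct' hcy
    obtain ⟨hLr, hpL⟩ := T.lastBorn_child (T.parent x) x hxr rfl
    rcases anc_comparable' hy hLy with h' | h'
    · -- Anc v L
      by_cases hvL : v = T.lastBorn (T.parent x)
      · exfalso
        have hvc : v ∈ T.choose x := hclo v (hvL ▸ ⟨0, rfl⟩) hy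
        exact hxN (Set.mem_insert_iff.mpr (Or.inr ⟨hxS, hv, hvc⟩))
      · have h1 : T.Anc v (T.parent x) := hpL ▸ anc_strict' h' hvL
        exact anc_trans' h1 (anc_parent' x)
    · -- Anc L v : then v ∈ choose x, contradiction
      exfalso
      have hvc : v ∈ T.choose x := hclo v h' hy
      exact hxN (Set.mem_insert_iff.mpr (Or.inr ⟨hxS, hv, hvc⟩))
  · -- Arc y x : x ∈ choose y
    obtain ⟨hyS, hxS, hcx⟩ := harc
    obtain ⟨hyr, hlb, hLx, hclo⟩ := choose_struct' hcx
    obtain ⟨hLr, hpL⟩ := T.lastBorn_child (T.parent y) y hyr rfl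
    have h1 : T.Anc v (T.parent y) := anc_strict' hy (Ne.symm hyv)
    have h2 : T.Anc v (T.lastBorn (T.parent y)) :=
      anc_trans' (show T.Anc v (T.parent (T.lastBorn (T.parent y))) by
        rw [hpL]; exact h1) (anc_parent' _)
    exact anc_trans' h2 hLx

end BurlingTree

/-- If `u`, `v`, `w` are three distinct vertices of a derived graph
appearing in this order along a branch of `T`, then `N⁻[v]` is a full in-star
cutset separating `u` from `w`. -/
theorem stmt6 (V : Type) (T : BurlingTree V) (S : Set V) (u v w : V)
    (hu : u ∈ S) (hv : v ∈ S) (hw : w ∈ S)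
    (huv : T.Anc u v) (hvw : T.Anc v w)
    (h1 : u ≠ v) (h2 : v ≠ w) (h3 : u ≠ w) :
    u ∈ S \ T.InNbhd S v ∧ w ∈ S \ T.InNbhd S v ∧
    ¬ ReachIn (T.UGraph S) (S \ T.InNbhd S v) u w ∧
    T.IsFullInStarCutset S v := by
  have huN : u ∉ T.InNbhd S v := by
    intro h
    rcases Set.mem_insert_iff.mp h with he | harc
    · exact h1 he
    · exact BurlingTree.not_choose_of_anc' huv h1 harc.2.2
  have hwN : w ∉ T.InNbhd S v := by
    intro h
    rcases Set.mem_insert_iff.mp h with he | harc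
    · exact h2 he.symm
    · exact BurlingTree.not_choose_of_desc' hvw h2 harc.2.2
  have hnvu : ¬ T.Anc v u := fun h => BurlingTree.anc_antisymm' huv h h1
  have hnotreach : ¬ ReachIn (T.UGraph S) (S \ T.InNbhd S v) u w := by
    intro hreach
    have key : ∀ z, Relation.ReflTransGen
        (fun x y => x ∈ S \ T.InNbhd S v ∧ y ∈ S \ T.InNbhd S v ∧
          (T.UGraph S).Adj x y) u z → ¬ T.Anc v z := by
      intro z hz
      induction hz with
      | refl => exact hnvu
      | @tail b c _ hstep ih =>
        intro hvc
        obtain ⟨hbA, hcA, hadj⟩ := hstep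
        exact ih (BurlingTree.closure' hv hvc hcA.2 hbA.2 hadj)
    exact key w hreach hvw
  exact ⟨⟨hu, huN⟩, ⟨hw, hwN⟩, hnotreach,
    ⟨u, ⟨hu, huN⟩, w, ⟨hw, hwN⟩, hnotreach⟩⟩
end

section
/- If a triangle-free oriented graph G has a cut vertex, then G has a full in-star cutset or G has a vertex of degree at most 1. -/
/-!
Let `v` be a cut vertex separating `a` from `b`. A vertex `x ≠ v` all of whose vertices
reachable in `G \ v` lie in `N⁻[v]` is an in-neighbour of `v`, and so is each of its other
neighbours; triangle-freeness then leaves `v` as its only neighbour. Otherwise `a` and `b`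
reach vertices `a'`, `b'` outside `N⁻[v]`, which `N⁻[v]` must separate, since a path between
them avoiding `N⁻[v]` would join `a` to `b` in `G \ v`.
-/

namespace ReachIn

variable {V : Type} {G : SimpleGraph V} {A B : Set V} {u w : V}

theorem mono (hAB : A ⊆ B) (h : ReachIn G A u w) : ReachIn G B u w :=
  Relation.ReflTransGen.mono (fun _ _ hxy => ⟨hAB hxy.1, hAB hxy.2.1, hxy.2.2⟩) _ _ h

theorem symm (h : ReachIn G A u w) : ReachIn G A w u :=
  Relation.ReflTransGen.mono (fun _ _ hxy => ⟨hxy.2.1, hxy.1, hxy.2.2.symm⟩) _ _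
    (Relation.ReflTransGen.swap _ _ h)

end ReachIn

namespace OrientedGraph

variable {V : Type} (G : OrientedGraph V)

theorem toSimpleGraph_adj_of_arc {x y : V} (h : G.arc x y) : G.toSimpleGraph.Adj x y :=
  (SimpleGraph.fromRel_adj _ _ _).2 ⟨fun hxy => G.irrefl x (hxy ▸ h), Or.inl h⟩

theorem compl_inNbhd_subset_compl_singleton (v : V) : (G.InNbhd v)ᶜ ⊆ {v}ᶜ :=
  Set.compl_subset_compl.2 (Set.singleton_subset_iff.2 (Set.mem_insert v _))

theorem exists_reachIn_notMem_inNbhd_or_subsingleton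
    (htf : ∀ a b c : V, ¬ (G.toSimpleGraph.Adj a b ∧ G.toSimpleGraph.Adj b c ∧
      G.toSimpleGraph.Adj a c))
    {v x : V} (hx : x ≠ v) :
    (∃ x', ReachIn G.toSimpleGraph {v}ᶜ x x' ∧ x' ∉ G.InNbhd v) ∨
      ({u | G.toSimpleGraph.Adj x u}).Subsingleton := by
  refine or_iff_not_imp_left.2 fun h => ?_
  push Not at h
  have arc_of_reachIn : ∀ u, u ≠ v → ReachIn G.toSimpleGraph {v}ᶜ x u → G.arc u v :=
    fun u hu hxu => (h u hxu).resolve_left hu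
  have hxv : G.arc x v := arc_of_reachIn x hx Relation.ReflTransGen.refl
  have neighbors_subset : {u | G.toSimpleGraph.Adj x u} ⊆ {v} := by
    intro u hxu
    by_contra huv
    have huv' : G.arc u v := arc_of_reachIn u huv (.single ⟨hx, huv, hxu⟩)
    exact htf x u v ⟨hxu, G.toSimpleGraph_adj_of_arc huv', G.toSimpleGraph_adj_of_arc hxv⟩
  exact Set.subsingleton_singleton.anti neighbors_subset

end OrientedGraph

/-- If a triangle-free oriented graph `G` has a cut vertex, then `G`
has a full in-star cutset or `G` has a vertex of degree at most 1. -/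
theorem stmt7 (V : Type) (G : OrientedGraph V)
    (htf : ∀ a b c : V, ¬ (G.toSimpleGraph.Adj a b ∧ G.toSimpleGraph.Adj b c ∧
      G.toSimpleGraph.Adj a c))
    (hcut : ∃ v, G.IsCutVertex v) :
    G.HasFullInStarCutset ∨ ∃ v : V, ({u | G.toSimpleGraph.Adj v u}).Subsingleton := by
  obtain ⟨v, a, b, ha, hb, -, hab⟩ := hcut
  rcases G.exists_reachIn_notMem_inNbhd_or_subsingleton htf ha with ⟨a', haa', ha'⟩ | hsa
  · rcases G.exists_reachIn_notMem_inNbhd_or_subsingleton htf hb with ⟨b', hbb', hb'⟩ | hsb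
    · refine Or.inl ⟨v, a', ha', b', hb', fun ha'b' => hab ?_⟩
      exact Relation.ReflTransGen.trans haa' <| Relation.ReflTransGen.trans
        (ha'b'.mono (G.compl_inNbhd_subset_compl_singleton v)) hbb'.symm
    · exact Or.inr ⟨b, hsb⟩
  · exact Or.inr ⟨a, hsa⟩
end

section
/- Let G be an oriented graph derived from a Burling tree T with top-set S. Then every sink of G[S] is a sink of G, and every source of G[S] is a source of G. -/
lemma BurlingTree.root_fixed {V : Type} (T : BurlingTree V) (n : ℕ) :
    T.parent^[n] T.root = T.root := by
  induction n with
  | zero => rfl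
  | succ n ih => rw [Function.iterate_succ_apply, T.parent_root, ih]

lemma BurlingTree.periodic_eq_root {V : Type} (T : BurlingTree V) {v : V} {k : ℕ}
    (hk : 0 < k) (h : T.parent^[k] v = v) : v = T.root := by
  obtain ⟨m, hm⟩ := T.reaches_root v
  have hmul : ∀ t : ℕ, T.parent^[k * t] v = v := by
    intro t
    induction t with
    | zero => rfl
    | succ t ih =>
      have : k * (t + 1) = k + k * t := by ring
      rw [this, Function.iterate_add_apply, ih, h]
  have h1 : T.parent^[k * (m + 1)] v = v := hmul (m + 1)
  have hle : m + 1 ≤ k * (m + 1) := Nat.le_mul_of_pos_left (m + 1) hk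
  have h2 : k * (m + 1) = (k * (m + 1) - m) + m := by omega
  rw [h2, Function.iterate_add_apply, hm, T.root_fixed] at h1
  exact h1.symm

lemma BurlingTree.exists_topmost {V : Type} (T : BurlingTree V) {S : Set V} {w : V}
    (hw : w ∈ S) : ∃ x ∈ T.TopSet S, ∃ n, T.parent^[n] w = x := by
  obtain ⟨N, hN⟩ := T.reaches_root w
  classical
  have hroot_ge : ∀ m, N ≤ m → T.parent^[m] w = T.root := by
    intro m hm
    have : m = (m - N) + N := by omega
    rw [this, Function.iterate_add_apply, hN, T.root_fixed]
  set F : Finset ℕ := (Finset.range (N + 1)).filter (fun n => T.parent^[n] w ∈ S) with hF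
  have h0 : 0 ∈ F := by
    simp only [hF, Finset.mem_filter, Finset.mem_range]
    exact ⟨by omega, hw⟩
  have hne : F.Nonempty := ⟨0, h0⟩
  set n := F.max' hne with hn
  have hnF : n ∈ F := F.max'_mem hne
  have hnS : T.parent^[n] w ∈ S := (Finset.mem_filter.mp hnF).2
  have hnN : n ≤ N := by
    have := (Finset.mem_range.mp (Finset.mem_filter.mp hnF).1); omega
  refine ⟨T.parent^[n] w, ⟨hnS, ?_⟩, n, rfl⟩
  intro y hy hanc
  obtain ⟨m, hm⟩ := hanc
  have hy' : T.parent^[m + n] w = y := by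
    rw [Function.iterate_add_apply]; exact hm
  by_cases hc : m + n ≤ N
  · have : m + n ∈ F := by
      simp only [hF, Finset.mem_filter, Finset.mem_range]
      exact ⟨by omega, hy' ▸ hy⟩
    have hle : m + n ≤ n := F.le_max' _ this
    have hm0 : m = 0 := by omega
    rw [hm0, Nat.zero_add] at hy'; exact hy'.symm
  · have hyr : y = T.root := by rw [← hy']; exact hroot_ge _ (by omega)
    have : N ∈ F := by
      simp only [hF, Finset.mem_filter, Finset.mem_range]
      exact ⟨by omega, by rw [hN, ← hyr]; exact hy⟩
    have hle : N ≤ n := F.le_max' _ this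
    have : n = N := by omega
    rw [this, hN, ← hyr]

/-- Every pivot (sink of `G[S']` where `S'` is the top-set) of a
derived graph `G` is a sink of `G`, and every antenna (source of `G[S']`) is a
source of `G`. -/
theorem stmt11 (V : Type) (T : BurlingTree V) (S : Set V) (v : V) :
    (v ∈ T.TopSet S → (∀ w, ¬ T.Arc (T.TopSet S) v w) → ∀ w, ¬ T.Arc S v w) ∧
    (v ∈ T.TopSet S → (∀ w, ¬ T.Arc (T.TopSet S) w v) → ∀ w, ¬ T.Arc S w v) := by
  constructor
  · -- pivots are sinks
    rintro hv hno w ⟨hvS, hwS, hwc⟩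
    have hvroot : v ≠ T.root := by
      rintro rfl; rw [T.choose_root] at hwc; exact hwc
    have hLne : T.lastBorn (T.parent v) ≠ v := by
      intro h; rw [T.choose_lastBorn v hvroot h] at hwc; exact hwc
    obtain hbr | ⟨b, _, hcv⟩ := T.choose_branch v hvroot hLne
    · rw [hbr] at hwc; exact hwc
    rw [hcv] at hwc
    obtain ⟨⟨j, hj⟩, k, hk⟩ := hwc
    obtain ⟨hLroot, hLpar⟩ := T.lastBorn_child (T.parent v) v hvroot rfl
    obtain ⟨x, hxTop, n, hn⟩ := T.exists_topmost hwS
    by_cases h : n ≤ j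
    · -- x is in choose v, contradicting that v is a sink of G[TopSet S]
      have h1 : T.parent^[j - n] x = T.lastBorn (T.parent v) := by
        rw [← hn, ← Function.iterate_add_apply]
        have : j - n + n = j := by omega
        rw [this, hj]
      have h2 : T.parent^[n + k] b = x := by
        rw [Function.iterate_add_apply, hk, hn]
      exact hno x ⟨hv, hxTop, by rw [hcv]; exact ⟨⟨j - n, h1⟩, n + k, h2⟩⟩
    · -- x is a strict ancestor of the last-born, hence of v; forces v = root
      have hx : T.parent^[n - j] (T.lastBorn (T.parent v)) = x := by
        rw [← hj, ← Function.iterate_add_apply]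
        have : n - j + j = n := by omega
        rw [this, hn]
      have hxv : T.parent^[n - j] v = x := by
        calc T.parent^[n - j] v = T.parent^[n - j - 1 + 1] v := by congr 1; omega
          _ = T.parent^[n - j - 1] (T.parent v) := Function.iterate_succ_apply _ _ _
          _ = T.parent^[n - j - 1] (T.parent (T.lastBorn (T.parent v))) := by rw [hLpar]
          _ = T.parent^[n - j - 1 + 1] (T.lastBorn (T.parent v)) :=
              (Function.iterate_succ_apply _ _ _).symm
          _ = T.parent^[n - j] (T.lastBorn (T.parent v)) := by congr 1; omega
          _ = x := hx
      have hxeq : x = v := hv.2 x hxTop.1 ⟨n - j, hxv⟩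
      rw [hxeq] at hxv
      exact hvroot (T.periodic_eq_root (by omega) hxv)
  · -- antennas are sources
    rintro hv hno w ⟨hwS, hvS, hvc⟩
    have hwroot : w ≠ T.root := by
      rintro rfl; rw [T.choose_root] at hvc; exact hvc
    have hLne : T.lastBorn (T.parent w) ≠ w := by
      intro h; rw [T.choose_lastBorn w hwroot h] at hvc; exact hvc
    obtain hbr | ⟨b, _, hcw⟩ := T.choose_branch w hwroot hLne
    · rw [hbr] at hvc; exact hvc
    obtain ⟨⟨j, hj⟩, k, hk⟩ := hcw ▸ hvc
    obtain ⟨hLroot, hLpar⟩ := T.lastBorn_child (T.parent w) w hwroot rfl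
    obtain ⟨x, hxTop, n, hn⟩ := T.exists_topmost hwS
    rcases Nat.eq_zero_or_pos n with hn0 | hnpos
    · -- x = w, so w itself is in the top-set: the arc lives in G[TopSet S]
      rw [hn0] at hn
      have hxw : x = w := by simpa using hn.symm
      exact hno w ⟨hxw ▸ hxTop, hv, hvc⟩
    · -- x is a strict ancestor of w, hence an ancestor of v; forces v = root
      have hvroot : v ≠ T.root := by
        rintro rfl; rw [T.root_fixed] at hj; exact hLroot hj.symm
      have hx : T.parent^[n] (T.lastBorn (T.parent w)) = x := by
        calc T.parent^[n] (T.lastBorn (T.parent w))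
            = T.parent^[n - 1 + 1] (T.lastBorn (T.parent w)) := by congr 1; omega
          _ = T.parent^[n - 1] (T.parent (T.lastBorn (T.parent w))) :=
              Function.iterate_succ_apply _ _ _
          _ = T.parent^[n - 1] (T.parent w) := by rw [hLpar]
          _ = T.parent^[n - 1 + 1] w := (Function.iterate_succ_apply _ _ _).symm
          _ = T.parent^[n] w := by congr 1; omega
          _ = x := hn
      have hxv : T.parent^[n + j] v = x := by
        rw [Function.iterate_add_apply, hj, hx]
      have hxeq : x = v := hv.2 x hxTop.1 ⟨n + j, hxv⟩
      rw [hxeq] at hxv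
      exact hvroot (T.periodic_eq_root (by omega) hxv)
end

section
/- Let G be an oriented graph derived from a Burling tree T and uv a bottom arc of G with respect to T. Then the oriented graph G' obtained from G by subdividing the arc uv into a directed path u→w→v (w a new vertex) can also be derived from a Burling tree. -/
namespace Stmt16

variable {V : Type}

lemma anc_refl (T : BurlingTree V) (a : V) : T.Anc a a := ⟨0, rfl⟩

lemma anc_trans {T : BurlingTree V} {a b c : V} (h1 : T.Anc a b) (h2 : T.Anc b c) :
    T.Anc a c := by
  obtain ⟨n, hn⟩ := h1; obtain ⟨m, hm⟩ := h2
  exact ⟨n + m, by rw [Function.iterate_add_apply, hm, hn]⟩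

lemma anc_parent (T : BurlingTree V) (b : V) : T.Anc (T.parent b) b := ⟨1, rfl⟩

lemma root_iter (T : BurlingTree V) (n : ℕ) : T.parent^[n] T.root = T.root := by
  induction n with
  | zero => rfl
  | succ n ih => rw [Function.iterate_succ_apply', ih, T.parent_root]

lemma eq_root_of_parent_fix {T : BurlingTree V} {x : V} (h : T.parent x = x) : x = T.root := by
  obtain ⟨n, hn⟩ := T.reaches_root x
  have hfix : ∀ m, T.parent^[m] x = x := by
    intro m; induction m with
    | zero => rfl
    | succ m ih => rw [Function.iterate_succ_apply', ih, h]
  rw [hfix n] at hn; exact hn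

lemma anc_antisymm {T : BurlingTree V} {a b : V} (h1 : T.Anc a b) (h2 : T.Anc b a) :
    a = b := by
  obtain ⟨n, hn⟩ := h1; obtain ⟨m, hm⟩ := h2
  rcases Nat.eq_zero_or_pos n with h0 | hpos
  · subst h0; exact hn.symm
  · -- b is periodic with period m+n ≥ 1
    have hper : T.parent^[m + n] b = b := by
      rw [Function.iterate_add_apply, hn, hm]
    have hmul : ∀ q, T.parent^[q * (m + n)] b = b := by
      intro q; induction q with
      | zero => simp
      | succ q ih => rw [Nat.succ_mul, Function.iterate_add_apply, hper, ih]
    obtain ⟨k, hk⟩ := T.reaches_root b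
    have hle : k ≤ k * (m + n) := Nat.le_mul_of_pos_right k (by omega)
    have : T.parent^[k * (m + n)] b = T.root := by
      have : k * (m + n) = (k * (m + n) - k) + k := by omega
      rw [this, Function.iterate_add_apply, hk, root_iter]
    have hb : b = T.root := by rw [← hmul k, this]
    have ha : a = T.root := by rw [← hn, hb, root_iter]
    rw [ha, hb]

lemma anc_of_anc_ne {T : BurlingTree V} {a b : V} (h : T.Anc a b) (hne : a ≠ b) :
    T.Anc a (T.parent b) := by
  obtain ⟨n, hn⟩ := h
  cases n with
  | zero => exact absurd hn.symm hne
  | succ n => exact ⟨n, by rw [← Function.iterate_succ_apply]; exact hn⟩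

lemma anc_total {T : BurlingTree V} {a b c : V} (h1 : T.Anc a c) (h2 : T.Anc b c) :
    T.Anc a b ∨ T.Anc b a := by
  obtain ⟨n, hn⟩ := h1; obtain ⟨m, hm⟩ := h2
  rcases le_total n m with h | h
  · right
    refine ⟨m - n, ?_⟩
    rw [← hn, ← Function.iterate_add_apply, Nat.sub_add_cancel h, hm]
  · left
    refine ⟨n - m, ?_⟩
    rw [← hm, ← Function.iterate_add_apply, Nat.sub_add_cancel h, hn]

end Stmt16

namespace Stmt16

variable {V : Type}

/- New parent function: fresh nodes `Z = inr 0`, `Z2 = inr 1`, `Wn = inr 2`.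
`Z` becomes a child of `p := parent v` (its new last-born); `Z2` is the
last-born child of `Z`; `Wn` is another child of `Z`; `v` and `lb := lastBorn p`
are rehung as children of `Z2` (with `lb` the last-born of `Z2`). -/
open Classical in
noncomputable def NP (T : BurlingTree V) (v : V) : V ⊕ Fin 3 → V ⊕ Fin 3 :=
  fun y => match y with
  | Sum.inl x => if x = v ∨ x = T.lastBorn (T.parent v) then Sum.inr 1 else Sum.inl (T.parent x)
  | Sum.inr i => if i = 0 then Sum.inl (T.parent v) else Sum.inr 0

open Classical in
noncomputable def NL (T : BurlingTree V) (v : V) : V ⊕ Fin 3 → V ⊕ Fin 3 :=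
  fun y => match y with
  | Sum.inl x => if x = T.parent v then Sum.inr 0 else Sum.inl (T.lastBorn x)
  | Sum.inr i => if i = 0 then Sum.inr 1
      else if i = 1 then Sum.inl (T.lastBorn (T.parent v)) else Sum.inr 2

/-- ancestry in the new tree -/
def nanc (T : BurlingTree V) (v : V) (a b : V ⊕ Fin 3) : Prop := ∃ n, (NP T v)^[n] b = a

open Classical in
noncomputable def NC (T : BurlingTree V) (u v : V) : V ⊕ Fin 3 → Set (V ⊕ Fin 3) :=
  fun y => match y with
  | Sum.inl x =>
      if x = u then {c | nanc T v (NL T v (NP T v (Sum.inl u))) c ∧ nanc T v c (Sum.inr 2)}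
      else {c | nanc T v (NL T v (NP T v (Sum.inl x))) c ∧
              ∃ d ∈ T.choose x, nanc T v c (Sum.inl d)}
  | Sum.inr i => if i = 2 then {c | nanc T v (Sum.inr 1) c ∧ nanc T v c (Sum.inl v)} else ∅

section Eqns
variable (T : BurlingTree V) (u v : V)

lemma NP_inr0 : NP T v (Sum.inr 0) = Sum.inl (T.parent v) := by simp [NP]
lemma NP_inr1 : NP T v (Sum.inr 1) = Sum.inr 0 := by simp [NP]
lemma NP_inr2 : NP T v (Sum.inr 2) = Sum.inr 0 := by simp [NP]
lemma NP_inl_v : NP T v (Sum.inl v) = Sum.inr 1 := by simp [NP]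
lemma NP_inl_lb : NP T v (Sum.inl (T.lastBorn (T.parent v))) = Sum.inr 1 := by simp [NP]
lemma NP_inl_of {x : V} (hx : x ≠ v) (hx' : x ≠ T.lastBorn (T.parent v)) :
    NP T v (Sum.inl x) = Sum.inl (T.parent x) := by simp [NP, hx, hx']

lemma NL_inr0 : NL T v (Sum.inr 0) = Sum.inr 1 := by simp [NL]
lemma NL_inr1 : NL T v (Sum.inr 1) = Sum.inl (T.lastBorn (T.parent v)) := by simp [NL]
lemma NL_inl_p : NL T v (Sum.inl (T.parent v)) = Sum.inr 0 := by simp [NL]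
lemma NL_inl_of {x : V} (hx : x ≠ T.parent v) :
    NL T v (Sum.inl x) = Sum.inl (T.lastBorn x) := by simp [NL, hx]

lemma NC_inr0 : NC T u v (Sum.inr 0) = ∅ := by simp [NC]
lemma NC_inr1 : NC T u v (Sum.inr 1) = ∅ := by simp [NC]
lemma NC_inr2 : NC T u v (Sum.inr 2) =
    {c | nanc T v (Sum.inr 1) c ∧ nanc T v c (Sum.inl v)} := by simp [NC]
lemma NC_inl_u : NC T u v (Sum.inl u) =
    {c | nanc T v (NL T v (NP T v (Sum.inl u))) c ∧ nanc T v c (Sum.inr 2)} := by simp [NC]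
lemma NC_inl_of {x : V} (hx : x ≠ u) : NC T u v (Sum.inl x) =
    {c | nanc T v (NL T v (NP T v (Sum.inl x))) c ∧
        ∃ d ∈ T.choose x, nanc T v c (Sum.inl d)} := by simp [NC, hx]

lemma no_to_inr2 : ∀ y, NP T v y ≠ Sum.inr 2 := by
  rintro (x | i)
  · by_cases h : x = v ∨ x = T.lastBorn (T.parent v) <;> simp [NP, h]
  · by_cases h : i = 0 <;> simp [NP, h]

lemma nanc_refl (a : V ⊕ Fin 3) : nanc T v a a := ⟨0, rfl⟩

lemma nanc_trans {a b c : V ⊕ Fin 3} (h1 : nanc T v a b) (h2 : nanc T v b c) :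
    nanc T v a c := by
  obtain ⟨n, hn⟩ := h1; obtain ⟨m, hm⟩ := h2
  exact ⟨n + m, by rw [Function.iterate_add_apply, hm, hn]⟩

end Eqns

end Stmt16

namespace Stmt16

variable {V : Type}

section Chains
variable {T : BurlingTree V} {u v : V}

-- `hlb2 : T.parent (T.lastBorn (T.parent v)) = T.parent v` will be supplied

/-- one old parent step simulated in the new tree -/
lemma np_step (hlb2 : T.parent (T.lastBorn (T.parent v)) = T.parent v) (x : V) :
    ∃ m, (NP T v)^[m] (Sum.inl x) = Sum.inl (T.parent x) := by
  by_cases hx : x = v ∨ x = T.lastBorn (T.parent v)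
  · refine ⟨3, ?_⟩
    have h1 : NP T v (Sum.inl x) = Sum.inr 1 := by
      rcases hx with h | h <;> rw [h]
      · exact NP_inl_v T v
      · exact NP_inl_lb T v
    have hpx : T.parent x = T.parent v := by
      rcases hx with h | h <;> rw [h]
      · exact hlb2
    show NP T v (NP T v (NP T v (Sum.inl x))) = _
    rw [h1, NP_inr1, NP_inr0, hpx]
  · push_neg at hx
    exact ⟨1, NP_inl_of T v hx.1 hx.2⟩

lemma np_iter (hlb2 : T.parent (T.lastBorn (T.parent v)) = T.parent v) (n : ℕ) (b : V) :
    ∃ m, (NP T v)^[m] (Sum.inl b) = Sum.inl (T.parent^[n] b) := by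
  induction n with
  | zero => exact ⟨0, rfl⟩
  | succ n ih =>
    obtain ⟨m1, hm1⟩ := ih
    obtain ⟨m2, hm2⟩ := np_step hlb2 (T.parent^[n] b)
    refine ⟨m2 + m1, ?_⟩
    rw [Function.iterate_add_apply, hm1, hm2, Function.iterate_succ_apply']

lemma nanc_of_anc (hlb2 : T.parent (T.lastBorn (T.parent v)) = T.parent v) {a b : V}
    (h : T.Anc a b) : nanc T v (Sum.inl a) (Sum.inl b) := by
  obtain ⟨n, hn⟩ := h
  obtain ⟨m, hm⟩ := np_iter (v := v) hlb2 n b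
  exact ⟨m, by rw [hm, hn]⟩

/-- projection to the old tree -/
def toOld (T : BurlingTree V) (v : V) : V ⊕ Fin 3 → V :=
  fun y => match y with
  | Sum.inl x => x
  | Sum.inr _ => T.parent v

lemma step_anc (hlb2 : T.parent (T.lastBorn (T.parent v)) = T.parent v) (y : V ⊕ Fin 3) :
    T.Anc (toOld T v (NP T v y)) (toOld T v y) := by
  rcases y with x | i
  · by_cases hx : x = v ∨ x = T.lastBorn (T.parent v)
    · have h1 : NP T v (Sum.inl x) = Sum.inr 1 := by
        rcases hx with h | h <;> rw [h]
        · exact NP_inl_v T v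
        · exact NP_inl_lb T v
      rw [h1]
      show T.Anc (T.parent v) x
      rcases hx with h | h <;> rw [h]
      · exact anc_parent T v
      · have := anc_parent T (T.lastBorn (T.parent v))
        rwa [hlb2] at this
    · push_neg at hx
      rw [NP_inl_of T v hx.1 hx.2]
      exact anc_parent T x
  · by_cases h0 : i = 0
    · rw [h0, NP_inr0]; exact anc_refl T _
    · have : NP T v (Sum.inr i) = Sum.inr 0 := by simp [NP, h0]
      rw [this]; exact anc_refl T _

lemma anc_of_nanc_aux (hlb2 : T.parent (T.lastBorn (T.parent v)) = T.parent v) :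
    ∀ (m : ℕ) (y : V ⊕ Fin 3) (a : V), (NP T v)^[m] y = Sum.inl a → T.Anc a (toOld T v y) := by
  intro m
  induction m with
  | zero => intro y a h; subst h; exact anc_refl T _
  | succ m ih =>
    intro y a h
    rw [Function.iterate_succ_apply] at h
    exact anc_trans (ih _ a h) (step_anc hlb2 y)

lemma anc_of_nanc (hlb2 : T.parent (T.lastBorn (T.parent v)) = T.parent v) {a b : V}
    (h : nanc T v (Sum.inl a) (Sum.inl b)) : T.Anc a b := by
  obtain ⟨m, hm⟩ := h
  exact anc_of_nanc_aux hlb2 m _ a hm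

/-- reaching a fresh node from an old one forces passing through v or lb -/
lemma hit_fresh : ∀ (m : ℕ) (x : V) (i : Fin 3), (NP T v)^[m] (Sum.inl x) = Sum.inr i →
    T.Anc v x ∨ T.Anc (T.lastBorn (T.parent v)) x := by
  intro m
  induction m with
  | zero => intro x i h; simp at h
  | succ m ih =>
    intro x i h
    by_cases hx : x = v
    · left; rw [hx]; exact anc_refl T v
    by_cases hx' : x = T.lastBorn (T.parent v)
    · right; rw [hx']; exact anc_refl T _
    · rw [Function.iterate_succ_apply, NP_inl_of T v hx hx'] at h
      rcases ih _ i h with h' | h'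
      · exact Or.inl (anc_trans h' (anc_parent T x))
      · exact Or.inr (anc_trans h' (anc_parent T x))

lemma nanc_inr2_only {y : V ⊕ Fin 3} (h : nanc T v (Sum.inr 2) y) : y = Sum.inr 2 := by
  obtain ⟨m, hm⟩ := h
  cases m with
  | zero => simpa using hm
  | succ m =>
    rw [Function.iterate_succ_apply'] at hm
    exact absurd hm (no_to_inr2 T v _)

end Chains

end Stmt16

namespace Stmt16

variable {V : Type}

lemma choose_interval {T : BurlingTree V} {x : V} (hne : T.choose x ≠ ∅) :
    ∃ b, T.Anc (T.lastBorn (T.parent x)) b ∧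
      T.choose x = {y | T.Anc (T.lastBorn (T.parent x)) y ∧ T.Anc y b} := by
  have hx : x ≠ T.root := by rintro rfl; exact hne T.choose_root
  have hlbx : T.lastBorn (T.parent x) ≠ x := fun h => hne (T.choose_lastBorn x hx h)
  rcases T.choose_branch x hx hlbx with h | ⟨b, h1, h2⟩
  · exact absurd h hne
  · exact ⟨b, h1, h2⟩

/-- siblings: a child of `parent v` which is an ancestor of another child equals it -/
lemma child_eq {T : BurlingTree V} {c d : V} (hc : T.parent c = T.parent d)
    (hcr : c ≠ T.root) (h : T.Anc c d) : c = d := by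
  by_contra hne
  have h2 : T.Anc c (T.parent d) := anc_of_anc_ne h hne
  rw [← hc] at h2
  have h3 : T.Anc (T.parent c) c := anc_parent T c
  have hcp : c = T.parent c := anc_antisymm h2 h3
  exact hcr (eq_root_of_parent_fix hcp.symm)

structure Ctx (T : BurlingTree V) (u v : V) : Type where
  hvcu : v ∈ T.choose u
  bu : V
  hbu : T.Anc (T.lastBorn (T.parent u)) bu
  hcueq : T.choose u = {y | T.Anc (T.lastBorn (T.parent u)) y ∧ T.Anc y bu}

noncomputable def mkCtx {T : BurlingTree V} {u v : V} (hvcu : v ∈ T.choose u) : Ctx T u v := by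
  have hne : T.choose u ≠ ∅ := fun h => by rw [h] at hvcu; exact hvcu
  exact ⟨hvcu, (choose_interval hne).choose, (choose_interval hne).choose_spec.1,
    (choose_interval hne).choose_spec.2⟩

namespace Ctx

variable {T : BurlingTree V} {u v : V} (C : Ctx T u v)

include C

lemma hu_root : u ≠ T.root := by
  rintro rfl
  have := C.hvcu
  rw [T.choose_root] at this
  exact this

lemma anc_tu_v : T.Anc (T.lastBorn (T.parent u)) v := by
  have := C.hvcu
  rw [C.hcueq] at this
  exact this.1

lemma anc_v_bu : T.Anc v C.bu := by
  have := C.hvcu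
  rw [C.hcueq] at this
  exact this.2

lemma htu1 : T.lastBorn (T.parent u) ≠ T.root :=
  (T.lastBorn_child (T.parent u) u C.hu_root rfl).1

lemma htu2 : T.parent (T.lastBorn (T.parent u)) = T.parent u :=
  (T.lastBorn_child (T.parent u) u C.hu_root rfl).2

lemma hv_root : v ≠ T.root := by
  intro h
  obtain ⟨n, hn⟩ := C.anc_tu_v
  rw [h, root_iter] at hn
  exact C.htu1 hn.symm

lemma hlb1 : T.lastBorn (T.parent v) ≠ T.root :=
  (T.lastBorn_child (T.parent v) v C.hv_root rfl).1

lemma hlb2 : T.parent (T.lastBorn (T.parent v)) = T.parent v :=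
  (T.lastBorn_child (T.parent v) v C.hv_root rfl).2

lemma not_anc_v_p : ¬ T.Anc v (T.parent v) := by
  intro h
  have h2 : T.Anc (T.parent v) v := anc_parent T v
  have : v = T.parent v := anc_antisymm h h2
  exact C.hv_root (eq_root_of_parent_fix this.symm)

lemma not_anc_lb_p : ¬ T.Anc (T.lastBorn (T.parent v)) (T.parent v) := by
  intro h
  have h2 : T.Anc (T.parent v) (T.lastBorn (T.parent v)) := by
    have := anc_parent T (T.lastBorn (T.parent v)); rwa [C.hlb2] at this
  have heq : T.lastBorn (T.parent v) = T.parent v := anc_antisymm h h2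
  have : T.parent (T.lastBorn (T.parent v)) = T.lastBorn (T.parent v) := by
    rw [C.hlb2, heq]
  exact C.hlb1 (eq_root_of_parent_fix this)

lemma anc_lb_v_eq (h : T.Anc (T.lastBorn (T.parent v)) v) : T.lastBorn (T.parent v) = v :=
  child_eq C.hlb2 C.hlb1 h

lemma anc_v_lb_eq (h : T.Anc v (T.lastBorn (T.parent v))) : v = T.lastBorn (T.parent v) :=
  child_eq C.hlb2.symm C.hv_root h

lemma hclb : T.choose (T.lastBorn (T.parent v)) = ∅ :=
  T.choose_lastBorn _ C.hlb1 (by rw [C.hlb2])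

lemma hu_ne_v : u ≠ v := by
  intro h
  have h1 := C.anc_tu_v
  rw [h] at h1
  have h2 := C.anc_lb_v_eq h1
  have : T.choose v = ∅ := T.choose_lastBorn v C.hv_root h2
  have hv := C.hvcu
  rw [h, this] at hv
  exact hv

lemma hu_ne_lb : u ≠ T.lastBorn (T.parent v) := by
  intro h
  have hv := C.hvcu
  rw [h, C.hclb] at hv
  exact hv

lemma par_u_p (h : T.parent u = T.parent v) : T.lastBorn (T.parent v) = v := by
  have h1 := C.anc_tu_v
  rw [h] at h1
  exact C.anc_lb_v_eq h1

lemma tu_v (h : T.lastBorn (T.parent u) = v) : T.parent u = T.parent v := by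
  have := C.htu2
  rw [h] at this
  exact this.symm

lemma anc_tu_p (h : T.parent u ≠ T.parent v) : T.Anc (T.lastBorn (T.parent u)) (T.parent v) := by
  have htuv : T.lastBorn (T.parent u) ≠ v := fun he => h (C.tu_v he)
  exact anc_of_anc_ne C.anc_tu_v htuv

end Ctx

end Stmt16

namespace Stmt16

variable {V : Type}

namespace Ctx

variable {T : BurlingTree V} {u v : V} (C : Ctx T u v)

include C

/-- above `parent v` the new tree agrees with the old one -/
lemma above_p : ∀ m, (NP T v)^[m] (Sum.inl (T.parent v)) =
    Sum.inl (T.parent^[m] (T.parent v)) := by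
  intro m
  induction m with
  | zero => rfl
  | succ m ih =>
    rw [Function.iterate_succ_apply', ih, Function.iterate_succ_apply']
    have h1 : T.parent^[m] (T.parent v) ≠ v := by
      intro h; exact C.not_anc_v_p ⟨m, h⟩
    have h2 : T.parent^[m] (T.parent v) ≠ T.lastBorn (T.parent v) := by
      intro h; exact C.not_anc_lb_p ⟨m, h⟩
    rw [NP_inl_of T v h1 h2]

/-- characterization of the new ancestors of `Wn = inr 2` -/
lemma nanc_inr2_iff {y : V ⊕ Fin 3} : nanc T v y (Sum.inr 2) ↔
    y = Sum.inr 2 ∨ y = Sum.inr 0 ∨ ∃ a, y = Sum.inl a ∧ T.Anc a (T.parent v) := by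
  constructor
  · rintro ⟨m, hm⟩
    match m with
    | 0 => exact Or.inl hm.symm
    | 1 =>
      rw [Function.iterate_one, NP_inr2] at hm
      exact Or.inr (Or.inl hm.symm)
    | (m + 2) =>
      right; right
      have h2 : (NP T v)^[2] (Sum.inr 2) = Sum.inl (T.parent v) := by
        show NP T v (NP T v (Sum.inr 2)) = _
        rw [NP_inr2, NP_inr0]
      rw [Function.iterate_add_apply, h2, C.above_p] at hm
      exact ⟨T.parent^[m] (T.parent v), hm.symm, ⟨m, rfl⟩⟩
  · rintro (rfl | rfl | ⟨a, rfl, n, hn⟩)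
    · exact nanc_refl T v _
    · exact ⟨1, by rw [Function.iterate_one, NP_inr2]⟩
    · refine ⟨n + 2, ?_⟩
      rw [Function.iterate_add_apply]
      have h2 : (NP T v)^[2] (Sum.inr 2) = Sum.inl (T.parent v) := by
        show NP T v (NP T v (Sum.inr 2)) = _
        rw [NP_inr2, NP_inr0]
      rw [h2, C.above_p, hn]

lemma not_nanc_inr1_inr2 : ¬ nanc T v (Sum.inr 1) (Sum.inr 2) := by
  rw [C.nanc_inr2_iff]
  rintro (h | h | ⟨a, h, -⟩) <;> simp at h

omit C

lemma nanc_inr0_inl_lb : nanc T v (Sum.inr 0) (Sum.inl (T.lastBorn (T.parent v))) :=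
  ⟨2, by show NP T v (NP T v _) = _; rw [NP_inl_lb, NP_inr1]⟩

lemma nanc_inr0_inl_v : nanc T v (Sum.inr 0) (Sum.inl v) :=
  ⟨2, by show NP T v (NP T v _) = _; rw [NP_inl_v, NP_inr1]⟩

include C

lemma nanc_inr0_of {y : V} (h : T.Anc (T.lastBorn (T.parent v)) y ∨ T.Anc v y) :
    nanc T v (Sum.inr 0) (Sum.inl y) := by
  rcases h with h | h
  · exact nanc_trans T v nanc_inr0_inl_lb (nanc_of_anc C.hlb2 h)
  · exact nanc_trans T v nanc_inr0_inl_v (nanc_of_anc C.hlb2 h)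

/-- `Wn` is a descendant of the relevant lastBorn for `u`'s new choose set -/
lemma nanc_NLU_inr2 : nanc T v (NL T v (NP T v (Sum.inl u))) (Sum.inr 2) := by
  rw [NP_inl_of T v C.hu_ne_v C.hu_ne_lb]
  by_cases h : T.parent u = T.parent v
  · rw [h, NL_inl_p]
    exact ⟨1, by rw [Function.iterate_one, NP_inr2]⟩
  · rw [NL_inl_of T v h]
    rw [C.nanc_inr2_iff]
    exact Or.inr (Or.inr ⟨_, rfl, C.anc_tu_p h⟩)

end Ctx

end Stmt16

namespace Stmt16

variable {V : Type}

namespace Ctx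

variable {T : BurlingTree V} {u v : V} (C : Ctx T u v)

include C

lemma np_root : NP T v (Sum.inl T.root) = Sum.inl T.root := by
  rw [NP_inl_of T v (Ne.symm C.hv_root) (Ne.symm C.hlb1), T.parent_root]

lemma reach_inl (x : V) : ∃ m, (NP T v)^[m] (Sum.inl x) = Sum.inl T.root := by
  obtain ⟨n, hn⟩ := T.reaches_root x
  obtain ⟨m, hm⟩ := np_iter (v := v) C.hlb2 n x
  exact ⟨m, by rw [hm, hn]⟩

lemma np_reaches : ∀ y, ∃ n, (NP T v)^[n] y = Sum.inl T.root := by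
  rintro (x | i)
  · exact C.reach_inl x
  · by_cases h0 : i = 0
    · obtain ⟨m, hm⟩ := C.reach_inl (T.parent v)
      refine ⟨m + 1, ?_⟩
      rw [Function.iterate_succ_apply, h0, NP_inr0, hm]
    · obtain ⟨m, hm⟩ := C.reach_inl (T.parent v)
      refine ⟨m + 2, ?_⟩
      have h1 : NP T v (Sum.inr i) = Sum.inr 0 := by simp [NP, h0]
      have h2 : (NP T v)^[2] (Sum.inr i) = Sum.inl (T.parent v) := by
        show NP T v (NP T v (Sum.inr i)) = _
        rw [h1, NP_inr0]
      rw [Function.iterate_add_apply, h2, hm]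

lemma nl_child : ∀ a c, c ≠ Sum.inl T.root → NP T v c = a →
    NL T v a ≠ Sum.inl T.root ∧ NP T v (NL T v a) = a := by
  rintro a (x | i) hc hpc
  · by_cases hx : x = v ∨ x = T.lastBorn (T.parent v)
    · have : NP T v (Sum.inl x) = Sum.inr 1 := by
        rcases hx with h | h <;> rw [h]
        · exact NP_inl_v T v
        · exact NP_inl_lb T v
      rw [this] at hpc; subst hpc
      rw [NL_inr1]
      exact ⟨by simp [C.hlb1], NP_inl_lb T v⟩
    · push_neg at hx
      rw [NP_inl_of T v hx.1 hx.2] at hpc; subst hpc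
      by_cases hpp : T.parent x = T.parent v
      · rw [hpp, NL_inl_p]
        exact ⟨by simp, by rw [NP_inr0]⟩
      · rw [NL_inl_of T v hpp]
        have hxr : x ≠ T.root := fun h => hc (by rw [h])
        obtain ⟨h1, h2⟩ := T.lastBorn_child (T.parent x) x hxr rfl
        refine ⟨by simp [h1], ?_⟩
        have hv' : T.lastBorn (T.parent x) ≠ v := by
          intro h; rw [h] at h2; exact hpp h2.symm
        have hlb' : T.lastBorn (T.parent x) ≠ T.lastBorn (T.parent v) := by
          intro h; rw [h, C.hlb2] at h2; exact hpp h2.symm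
        rw [NP_inl_of T v hv' hlb', h2]
  · by_cases h0 : i = 0
    · rw [h0, NP_inr0] at hpc; subst hpc
      rw [NL_inl_p]
      exact ⟨by simp, NP_inr0 T v⟩
    · have : NP T v (Sum.inr i) = Sum.inr 0 := by simp [NP, h0]
      rw [this] at hpc; subst hpc
      rw [NL_inr0]
      exact ⟨by simp, NP_inr1 T v⟩

lemma nc_root : NC T u v (Sum.inl T.root) = ∅ := by
  rw [NC_inl_of T u v (Ne.symm C.hu_root)]
  ext c
  simp [T.choose_root]

lemma nc_lastBorn : ∀ y, y ≠ Sum.inl T.root → NL T v (NP T v y) = y → NC T u v y = ∅ := by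
  rintro (x | i) hy hl
  · by_cases hxu : x = u
    · subst hxu
      rw [NP_inl_of T v C.hu_ne_v C.hu_ne_lb] at hl
      by_cases hpp : T.parent x = T.parent v
      · rw [hpp, NL_inl_p] at hl; simp at hl
      · rw [NL_inl_of T v hpp] at hl
        have : T.lastBorn (T.parent x) = x := by simpa using hl
        have hdead := T.choose_lastBorn x C.hu_root this
        have := C.hvcu
        rw [hdead] at this
        exact this.elim
    · by_cases hx : x = v ∨ x = T.lastBorn (T.parent v)
      · have hnp : NP T v (Sum.inl x) = Sum.inr 1 := by
          rcases hx with h | h <;> rw [h]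
          · exact NP_inl_v T v
          · exact NP_inl_lb T v
        rw [hnp, NL_inr1] at hl
        have hlbx : T.lastBorn (T.parent v) = x := by simpa using hl
        have hcx : T.choose x = ∅ := by
          rcases hx with h | h
          · subst h; exact T.choose_lastBorn x C.hv_root hlbx
          · subst h; exact C.hclb
        rw [NC_inl_of T u v hxu]
        ext c; simp [hcx]
      · push_neg at hx
        rw [NP_inl_of T v hx.1 hx.2] at hl
        by_cases hpp : T.parent x = T.parent v
        · rw [hpp, NL_inl_p] at hl; simp at hl
        · rw [NL_inl_of T v hpp] at hl
          have : T.lastBorn (T.parent x) = x := by simpa using hl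
          have hxr : x ≠ T.root := fun h => hy (by rw [h])
          have hcx := T.choose_lastBorn x hxr this
          rw [NC_inl_of T u v hxu]
          ext c; simp [hcx]
  · by_cases h0 : i = 0
    · subst h0; exact NC_inr0 T u v
    · by_cases h1 : i = 1
      · subst h1; exact NC_inr1 T u v
      · have h2 : i = 2 := by omega
        subst h2
        rw [NP_inr2, NL_inr0] at hl
        simp at hl

lemma nc_branch : ∀ y, y ≠ Sum.inl T.root → NL T v (NP T v y) ≠ y →
    NC T u v y = ∅ ∨ ∃ b, nanc T v (NL T v (NP T v y)) b ∧
      NC T u v y = {c | nanc T v (NL T v (NP T v y)) c ∧ nanc T v c b} := by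
  rintro (x | i) hy hl
  · by_cases hxu : x = u
    · subst hxu
      exact Or.inr ⟨Sum.inr 2, C.nanc_NLU_inr2, by rw [NC_inl_u]⟩
    · by_cases hch : T.choose x = ∅
      · left; rw [NC_inl_of T u v hxu]; ext c; simp [hch]
      · obtain ⟨b, hb1, hb2⟩ := choose_interval hch
        right
        refine ⟨Sum.inl b, ?_, ?_⟩
        · by_cases hxv : x = v
          · subst hxv
            rw [NP_inl_v, NL_inr1]
            exact nanc_of_anc C.hlb2 hb1
          · by_cases hxlb : x = T.lastBorn (T.parent v)
            · exact absurd (hxlb ▸ C.hclb) hch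
            · rw [NP_inl_of T v hxv hxlb]
              by_cases hpp : T.parent x = T.parent v
              · rw [hpp, NL_inl_p]
                rw [hpp] at hb1
                exact C.nanc_inr0_of (Or.inl hb1)
              · rw [NL_inl_of T v hpp]
                exact nanc_of_anc C.hlb2 hb1
        · rw [NC_inl_of T u v hxu]
          ext c
          simp only [Set.mem_setOf_eq]
          constructor
          · rintro ⟨h1, d, hd, h2⟩
            refine ⟨h1, nanc_trans T v h2 (nanc_of_anc C.hlb2 ?_)⟩
            rw [hb2] at hd
            exact hd.2
          · rintro ⟨h1, h2⟩
            exact ⟨h1, b, by rw [hb2]; exact ⟨hb1, anc_refl T b⟩, h2⟩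
  · by_cases h0 : i = 0
    · subst h0; exact Or.inl (NC_inr0 T u v)
    · by_cases h1 : i = 1
      · subst h1; exact Or.inl (NC_inr1 T u v)
      · have h2 : i = 2 := by omega
        subst h2
        right
        have e : NL T v (NP T v (Sum.inr 2)) = Sum.inr 1 := by rw [NP_inr2, NL_inr0]
        rw [e, NC_inr2]
        exact ⟨Sum.inl v, ⟨1, by rw [Function.iterate_one, NP_inl_v]⟩, rfl⟩

/-- the new Burling tree -/
noncomputable def newTree : BurlingTree (V ⊕ Fin 3) where
  root := Sum.inl T.root
  parent := NP T v
  parent_root := C.np_root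
  reaches_root := C.np_reaches
  lastBorn := NL T v
  lastBorn_child := C.nl_child
  choose := NC T u v
  choose_root := C.nc_root
  choose_lastBorn := C.nc_lastBorn
  choose_branch := C.nc_branch

end Ctx

end Stmt16

namespace Stmt16

variable {V : Type}

namespace Ctx

variable {T : BurlingTree V} {u v : V} (C : Ctx T u v)

include C

lemma main_none_none : Sum.inr 2 ∉ NC T u v (Sum.inr 2) := by
  rw [NC_inr2]
  rintro ⟨h1, -⟩
  exact C.not_nanc_inr1_inr2 h1

lemma main_none_some {y : V} : (Sum.inl y ∈ NC T u v (Sum.inr 2)) ↔ y = v := by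
  rw [NC_inr2]
  constructor
  · rintro ⟨⟨m, hm⟩, h2⟩
    have hyv : T.Anc y v := anc_of_nanc C.hlb2 h2
    rcases hit_fresh m y 1 hm with hv | hlb
    · exact (anc_antisymm hv hyv).symm
    · have hlv : T.Anc (T.lastBorn (T.parent v)) v := anc_trans hlb hyv
      have heq := C.anc_lb_v_eq hlv
      have hv' : T.Anc v y := by rw [← heq]; exact hlb
      exact (anc_antisymm hv' hyv).symm
  · intro h
    refine ⟨⟨1, ?_⟩, ?_⟩
    · rw [Function.iterate_one, h]; exact NP_inl_v T v
    · rw [h]; exact nanc_refl T v _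

lemma main_u_none : Sum.inr 2 ∈ NC T u v (Sum.inl u) := by
  rw [NC_inl_u]
  exact ⟨C.nanc_NLU_inr2, nanc_refl T v _⟩

lemma main_u_some {S : Set V} (hbot : ∀ w, T.Arc S u w → T.Anc w v)
    (huS : u ∈ S) {y : V} (hyS : y ∈ S) :
    (Sum.inl y ∈ NC T u v (Sum.inl u)) ↔ (y ∈ T.choose u ∧ y ≠ v) := by
  rw [NC_inl_u, NP_inl_of T v C.hu_ne_v C.hu_ne_lb]
  by_cases hpp : T.parent u = T.parent v
  · -- here v = lastBorn (parent v) and both sides are false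
    have hlbv : T.lastBorn (T.parent v) = v := C.par_u_p hpp
    rw [hpp, NL_inl_p]
    constructor
    · rintro ⟨⟨m, hm⟩, h2⟩
      exfalso
      have hvy : T.Anc v y := by
        rcases hit_fresh m y 0 hm with hv | hlb
        · exact hv
        · rwa [hlbv] at hlb
      rcases C.nanc_inr2_iff.mp h2 with h | h | ⟨a, ha, hap⟩
      · simp at h
      · simp at h
      · have hya : y = a := by simpa using ha
        subst hya
        exact C.not_anc_v_p (anc_trans hvy hap)
    · rintro ⟨hyc, hyne⟩
      exfalso
      have h1 : T.Anc (T.lastBorn (T.parent u)) y := by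
        rw [C.hcueq] at hyc; exact hyc.1
      rw [hpp, hlbv] at h1
      have h2 : T.Anc y v := hbot y ⟨huS, hyS, hyc⟩
      exact hyne (anc_antisymm h2 h1)
  · rw [NL_inl_of T v hpp]
    constructor
    · rintro ⟨h1, h2⟩
      have htuy : T.Anc (T.lastBorn (T.parent u)) y := anc_of_nanc C.hlb2 h1
      have hyp : T.Anc y (T.parent v) := by
        rcases C.nanc_inr2_iff.mp h2 with h | h | ⟨a, ha, hap⟩
        · simp at h
        · simp at h
        · have hya : y = a := by simpa using ha
          subst hya; exact hap
      have hyne : y ≠ v := by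
        rintro rfl
        exact C.not_anc_v_p hyp
      refine ⟨?_, hyne⟩
      rw [C.hcueq]
      exact ⟨htuy, anc_trans (anc_trans hyp (anc_parent T v)) C.anc_v_bu⟩
    · rintro ⟨hyc, hyne⟩
      have hyv : T.Anc y v := hbot y ⟨huS, hyS, hyc⟩
      rw [C.hcueq] at hyc
      refine ⟨nanc_of_anc C.hlb2 hyc.1, ?_⟩
      rw [C.nanc_inr2_iff]
      exact Or.inr (Or.inr ⟨y, rfl, anc_of_anc_ne hyv hyne⟩)

lemma main_other_none {x : V} (hxu : x ≠ u) : Sum.inr 2 ∉ NC T u v (Sum.inl x) := by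
  rw [NC_inl_of T u v hxu]
  rintro ⟨-, d, -, h2⟩
  have := nanc_inr2_only (T := T) (v := v) h2
  simp at this

lemma main_other_some {x y : V} (hxu : x ≠ u) :
    (Sum.inl y ∈ NC T u v (Sum.inl x)) ↔ y ∈ T.choose x := by
  rw [NC_inl_of T u v hxu]
  constructor
  · rintro ⟨h1, d, hd, h2⟩
    have hch : T.choose x ≠ ∅ := fun h => by rw [h] at hd; exact hd
    obtain ⟨b, hb1, hb2⟩ := choose_interval hch
    have hyd : T.Anc y d := anc_of_nanc C.hlb2 h2
    have hdb : T.Anc d b := by rw [hb2] at hd; exact hd.2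
    have hyb : T.Anc y b := anc_trans hyd hdb
    have hkey : T.Anc (T.lastBorn (T.parent x)) y := by
      by_cases hxv : x = v
      · subst hxv
        rw [NP_inl_v, NL_inr1] at h1
        exact anc_of_nanc C.hlb2 h1
      by_cases hxlb : x = T.lastBorn (T.parent v)
      · exact absurd (hxlb ▸ C.hclb) hch
      rw [NP_inl_of T v hxv hxlb] at h1
      by_cases hpp : T.parent x = T.parent v
      · rw [hpp, NL_inl_p] at h1
        obtain ⟨m, hm⟩ := h1
        rw [hpp]
        rcases hit_fresh m y 0 hm with hv | hlb
        · -- Anc v y ; show lastBorn (parent v) = v in this situation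
          have hvb : T.Anc v b := anc_trans hv hyb
          have hlbb : T.Anc (T.lastBorn (T.parent v)) b := by
            rw [hpp] at hb1; exact hb1
          have heq : T.lastBorn (T.parent v) = v := by
            rcases anc_total hvb hlbb with h | h
            · exact (C.anc_v_lb_eq h).symm
            · exact C.anc_lb_v_eq h
          rw [heq]; exact hv
        · exact hlb
      · rw [NL_inl_of T v hpp] at h1
        exact anc_of_nanc C.hlb2 h1
    rw [hb2]
    exact ⟨hkey, hyb⟩
  · intro hyc
    have hch : T.choose x ≠ ∅ := fun h => by rw [h] at hyc; exact hyc
    obtain ⟨b, hb1, hb2⟩ := choose_interval hch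
    have h1' : T.Anc (T.lastBorn (T.parent x)) y := by rw [hb2] at hyc; exact hyc.1
    refine ⟨?_, y, hyc, nanc_refl T v _⟩
    by_cases hxv : x = v
    · subst hxv
      rw [NP_inl_v, NL_inr1]
      exact nanc_of_anc C.hlb2 h1'
    by_cases hxlb : x = T.lastBorn (T.parent v)
    · exact absurd (hxlb ▸ C.hclb) hch
    rw [NP_inl_of T v hxv hxlb]
    by_cases hpp : T.parent x = T.parent v
    · rw [hpp, NL_inl_p]
      refine C.nanc_inr0_of (Or.inl ?_)
      rw [hpp] at h1'
      exact h1'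
    · rw [NL_inl_of T v hpp]
      exact nanc_of_anc C.hlb2 h1'

end Ctx

end Stmt16

/-- If `uv` is a bottom arc of a graph `G` derived from a Burling
tree `T` (every out-neighbor of `u` is an ancestor of `v`), then the graph obtained
from `G` by subdividing `uv` into a directed path `u → w → v`, where `w` is a new
vertex (`none`), can also be derived from a Burling tree. -/
theorem stmt16 (V : Type) (T : BurlingTree V) (S : Set V) (u v : V)
    (huv : T.Arc S u v)
    (hbot : ∀ w, T.Arc S u w → T.Anc w v) :
    IsDerivedOn (fun a b : Option V =>
        (∃ x y, a = some x ∧ b = some y ∧ T.Arc S x y ∧ ¬ (x = u ∧ y = v)) ∨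
        (a = some u ∧ b = none) ∨ (a = none ∧ b = some v))
      (insert none (Option.some '' S)) := by
  classical
  obtain ⟨huS, hvS, hvcu⟩ := huv
  have C : Stmt16.Ctx T u v := Stmt16.mkCtx hvcu
  refine ⟨V ⊕ Fin 3, C.newTree,
    fun o => Option.elim o (Sum.inr 2) Sum.inl, ?_, ?_⟩
  · -- injectivity
    rintro a - b - hab
    match a, b with
    | none, none => rfl
    | some x, some y => simp only [Option.elim] at hab; rw [Sum.inl.injEq] at hab; rw [hab]
    | none, some y => simp only [Option.elim] at hab; exact absurd hab (by simp)
    | some x, none => simp only [Option.elim] at hab; exact absurd hab (by simp)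
  · intro a ha b hb
    have hset : ∀ c : Option V, c ∈ insert none (Option.some '' S) →
        c = none ∨ ∃ z ∈ S, c = some z := by
      intro c hc
      rcases hc with h | ⟨z, hz, hzc⟩
      · exact Or.inl h
      · exact Or.inr ⟨z, hz, hzc.symm⟩
    rcases hset a ha with rfl | ⟨x, hxS, rfl⟩ <;> rcases hset b hb with rfl | ⟨y, hyS, rfl⟩
    · -- none, none
      refine iff_of_false ?_ C.main_none_none
      rintro (⟨x, y, h, -⟩ | ⟨h, -⟩ | ⟨-, h⟩) <;> simp at h
    · -- none, some y
      constructor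
      · rintro (⟨x', y', h, -⟩ | ⟨h, -⟩ | ⟨-, h⟩)
        · simp at h
        · simp at h
        · exact C.main_none_some.mpr (Option.some.inj h)
      · intro h
        exact Or.inr (Or.inr ⟨rfl, by rw [C.main_none_some.mp h]⟩)
    · -- some x, none
      by_cases hxu : x = u
      · subst hxu
        exact iff_of_true (Or.inr (Or.inl ⟨rfl, rfl⟩)) C.main_u_none
      · refine iff_of_false ?_ (C.main_other_none hxu)
        rintro (⟨x', y', -, h, -⟩ | ⟨h, -⟩ | ⟨h, -⟩)
        · simp at h
        · exact hxu (Option.some.inj h)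
        · simp at h
    · -- some x, some y
      by_cases hxu : x = u
      · subst hxu
        constructor
        · rintro (⟨x', y', hx', hy', harc, hne⟩ | ⟨-, h⟩ | ⟨h, -⟩)
          · obtain rfl := Option.some.inj hx'
            obtain rfl := Option.some.inj hy'
            exact (C.main_u_some hbot huS hyS).mpr
              ⟨harc.2.2, fun hv => hne ⟨rfl, hv⟩⟩
          · simp at h
          · simp at h
        · intro h
          obtain ⟨hyc, hyne⟩ := (C.main_u_some hbot huS hyS).mp h
          exact Or.inl ⟨x, y, rfl, rfl, ⟨huS, hyS, hyc⟩, fun hc => hyne hc.2⟩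
      · constructor
        · rintro (⟨x', y', hx', hy', harc, -⟩ | ⟨h, -⟩ | ⟨h, -⟩)
          · obtain rfl := Option.some.inj hx'
            obtain rfl := Option.some.inj hy'
            exact (C.main_other_some hxu).mpr harc.2.2
          · exact absurd (Option.some.inj h) hxu
          · simp at h
        · intro h
          exact Or.inl ⟨x, y, rfl, rfl, ⟨hxS, hyS, (C.main_other_some hxu).mp h⟩,
            fun hc => hxu hc.1⟩
end
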